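/- Let n ≥ 1, let A₋ ∈ Oₙ⁻, let v ∈ ℝⁿ be a unit vector, and set A₊ = A₋(I − 2 v vᵀ). Define s(z) = 1 − (1 + e^{√2 z})⁻¹ and Θ(z) = s(z) A₊ + (1 − s(z)) A₋. Then the equipartition identity (1/2)‖Θ'(z)‖² = F(Θ(z)) holds for every z ∈ ℝ, where ‖·‖ is the Frobenius norm. -/

import Mathlib

open Matrix

attribute [local instance] Matrix.frobeniusNormedAddCommGroup Matrix.frobeniusNormedSpace

noncomputable def sProfile (z : ℝ) : ℝ := 1 - (1 + Real.exp (Real.sqrt 2 * z))⁻¹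

/-- The Saint Venant–Kirchhoff potential `F(A) = (1/4)‖AAᵀ − I‖²` with the Frobenius norm. -/
noncomputable def potF {n : ℕ} (A : Matrix (Fin n) (Fin n) ℝ) : ℝ :=
  (1 / 4) * ‖A * Aᵀ - 1‖ ^ 2

lemma frob_sq {n : ℕ} (M : Matrix (Fin n) (Fin n) ℝ) :
    ‖M‖ ^ 2 = ∑ i, ∑ j, (M i j) ^ 2 := by
  have h := Matrix.frobenius_norm_def M
  have hnn : (0:ℝ) ≤ ∑ i, ∑ j, ‖M i j‖ ^ (2:ℝ) := by
    apply Finset.sum_nonneg; intro i _; apply Finset.sum_nonneg; intro j _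
    positivity
  rw [h, ← Real.rpow_natCast _ 2, ← Real.rpow_mul hnn]
  norm_num

lemma frob_vecMulVec {n : ℕ} (a b : Fin n → ℝ) :
    ‖vecMulVec a b‖ ^ 2 = (∑ i, a i ^ 2) * (∑ j, b j ^ 2) := by
  rw [frob_sq, Finset.sum_mul]
  congr 1; ext i
  rw [Finset.mul_sum]
  congr 1; ext j
  rw [vecMulVec_apply]; ring

lemma mul_vecMulVec' {n : ℕ} (A : Matrix (Fin n) (Fin n) ℝ) (a b : Fin n → ℝ) :
    A * vecMulVec a b = vecMulVec (A *ᵥ a) b := by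
  ext i j
  simp only [Matrix.mul_apply, vecMulVec_apply, Matrix.mulVec, dotProduct,
    Finset.sum_mul]
  congr 1; ext k; ring

lemma vecMulVec_mul' {n : ℕ} (A : Matrix (Fin n) (Fin n) ℝ) (a b : Fin n → ℝ) :
    vecMulVec a b * A = vecMulVec a (Aᵀ *ᵥ b) := by
  ext i j
  simp only [Matrix.mul_apply, vecMulVec_apply, Matrix.mulVec, dotProduct,
    Finset.mul_sum, Matrix.transpose_apply]
  congr 1; ext k; ring

lemma vecMulVec_transpose' {n : ℕ} (a b : Fin n → ℝ) :
    (vecMulVec a b)ᵀ = vecMulVec b a := by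
  ext i j; simp [vecMulVec_apply, mul_comm]

theorem stmt8 {n : ℕ} (hn : 1 ≤ n) (Aminus : Matrix (Fin n) (Fin n) ℝ)
    (hAm : Aminus * Aminusᵀ = 1) (hAmdet : Aminus.det = -1)
    (v : EuclideanSpace ℝ (Fin n)) (hv : ‖v‖ = 1)
    (Aplus : Matrix (Fin n) (Fin n) ℝ)
    (hAp : Aplus = Aminus * (1 - (2 : ℝ) • Matrix.vecMulVec (v : Fin n → ℝ) (v : Fin n → ℝ)))
    (Θ : ℝ → Matrix (Fin n) (Fin n) ℝ)
    (hΘ : Θ = fun z => sProfile z • Aplus + (1 - sProfile z) • Aminus) :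
    ∀ z : ℝ, (1 / 2) * ‖deriv Θ z‖ ^ 2 = potF (Θ z) := by
  intro z
  set u : Fin n → ℝ := Aminus *ᵥ (v : Fin n → ℝ) with hu
  set W : Matrix (Fin n) (Fin n) ℝ := vecMulVec u (v : Fin n → ℝ) with hW
  -- sum facts
  have hvsum : (∑ i, (v : Fin n → ℝ) i ^ 2) = 1 := by
    have h1 := EuclideanSpace.norm_eq v
    rw [hv] at h1
    have hnn : (0:ℝ) ≤ ∑ i, ‖v i‖ ^ 2 := by positivity
    have h3 : (∑ i, ‖v i‖ ^ 2) = 1 := by nlinarith [Real.sq_sqrt hnn, h1.symm]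
    simpa [Real.norm_eq_abs, sq_abs] using h3
  have hAtA : Aminusᵀ * Aminus = 1 := mul_eq_one_comm.mp hAm
  have hdot : (v : Fin n → ℝ) ⬝ᵥ (v : Fin n → ℝ) = 1 := by
    simpa [dotProduct, sq] using hvsum
  have husum : (∑ i, u i ^ 2) = 1 := by
    have h1 : (∑ i, u i ^ 2) = u ⬝ᵥ u := by simp [dotProduct, sq]
    rw [h1, hu, Matrix.dotProduct_mulVec, ← Matrix.mulVec_transpose,
      Matrix.mulVec_mulVec, hAtA, Matrix.one_mulVec, hdot]
  -- Aplus in terms of W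
  have hAplus : Aplus = Aminus + (-2 : ℝ) • W := by
    rw [hAp, mul_sub, mul_one, Matrix.mul_smul, mul_vecMulVec', ← hu, ← hW]
    module
  -- derivative facts
  set E := Real.exp (Real.sqrt 2 * z) with hE
  have hEpos : 0 < E := Real.exp_pos _
  have h1E : (1 : ℝ) + E ≠ 0 := by positivity
  have hlin : HasDerivAt (fun w : ℝ => Real.sqrt 2 * w) (Real.sqrt 2) z := by
    simpa using (hasDerivAt_id z).const_mul (Real.sqrt 2)
  have hexp : HasDerivAt (fun w : ℝ => Real.exp (Real.sqrt 2 * w)) (E * Real.sqrt 2) z := by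
    simpa [hE] using hlin.exp
  have hs : HasDerivAt sProfile (E * Real.sqrt 2 / (1 + E) ^ 2) z := by
    have h2 : HasDerivAt (fun w : ℝ => (1 + Real.exp (Real.sqrt 2 * w))⁻¹)
        (-(E * Real.sqrt 2) / (1 + E) ^ 2) z := by
      exact (hexp.const_add 1).inv h1E
    have h3 := h2.const_sub 1
    rw [show sProfile = fun w => 1 - (1 + Real.exp (Real.sqrt 2 * w))⁻¹ from rfl]
    simpa [neg_div] using h3
  set s' : ℝ := E * Real.sqrt 2 / (1 + E) ^ 2 with hs'
  set s : ℝ := sProfile z with hsdef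
  -- Θ and its derivative
  have hΘfun : Θ = fun w : ℝ => sProfile w • (Aplus - Aminus) + Aminus := by
    rw [hΘ]; funext w; module
  have hderiv : deriv Θ z = s' • (Aplus - Aminus) := by
    rw [hΘfun]
    exact ((hs.smul_const (Aplus - Aminus)).add_const Aminus).deriv
  have hD : Aplus - Aminus = (-2 : ℝ) • W := by rw [hAplus]; module
  -- LHS norm
  have hLHS : ‖deriv Θ z‖ ^ 2 = s' ^ 2 * 4 := by
    rw [hderiv, hD, smul_smul, norm_smul, hW, mul_pow, frob_vecMulVec,
      husum, hvsum, Real.norm_eq_abs, sq_abs]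
    ring
  -- Θ z
  have hΘz : Θ z = Aminus + (-(2 * s)) • W := by
    rw [hΘ]; simp only []
    rw [hAplus, ← hsdef]; module
  -- product computation
  have hAWt : Aminus * vecMulVec (v : Fin n → ℝ) u = vecMulVec u u := by
    rw [mul_vecMulVec', ← hu]
  have hWAt : W * Aminusᵀ = vecMulVec u u := by
    rw [hW, vecMulVec_mul', Matrix.transpose_transpose, ← hu]
  have hWvec : W *ᵥ (v : Fin n → ℝ) = u := by
    funext i
    rw [hW]
    simp only [Matrix.mulVec, dotProduct, vecMulVec_apply]
    rw [show ∑ j, u i * (v : Fin n → ℝ) j * (v : Fin n → ℝ) j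
        = u i * ∑ j, (v : Fin n → ℝ) j ^ 2 by rw [Finset.mul_sum]; congr 1; ext j; ring,
      hvsum, mul_one]
  have hWWt : W * Wᵀ = vecMulVec u u := by
    rw [hW, vecMulVec_transpose', ← hW, mul_vecMulVec', hWvec]
  have hM : Θ z * (Θ z)ᵀ - 1 = (4 * s ^ 2 - 4 * s) • vecMulVec u u := by
    rw [hΘz, Matrix.transpose_add, Matrix.transpose_smul, hW, vecMulVec_transpose', ← hW,
      Matrix.add_mul, Matrix.mul_add, Matrix.mul_add, Matrix.mul_smul, Matrix.smul_mul,
      Matrix.smul_mul, Matrix.mul_smul, hAWt, hWAt, hAm]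
    rw [show W * vecMulVec (v : Fin n → ℝ) u = vecMulVec u u by
      rw [mul_vecMulVec', hWvec]]
    module
  -- RHS value
  have hRHS : potF (Θ z) = (1 / 4) * (4 * s ^ 2 - 4 * s) ^ 2 := by
    rw [potF, hM, norm_smul, mul_pow, frob_vecMulVec, husum,
      Real.norm_eq_abs, sq_abs]
    ring
  -- final scalar identity
  rw [hLHS, hRHS]
  have hsval : s = 1 - (1 + E)⁻¹ := by rw [hsdef, sProfile, hE]
  have hs2 : s' ^ 2 = 2 * E ^ 2 / ((1 + E) ^ 2) ^ 2 := by
    rw [hs', div_pow, mul_pow, Real.sq_sqrt (by norm_num : (0:ℝ) ≤ 2)]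
    ring
  rw [hsval, hs2]
  field_simp
  ring
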